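/- Let q ∈ (0,1], let n be a nonnegative integer, let real coefficients b^n_{ijk} be given for all nonnegative i, j, k with i + j + k = n, and let γ^n(u,v) = Σ_{i+j+k=n} b^n_{ijk} B^n_{ijk}(u,v). Define, for nonnegative i, j, k with i + j + k = n + 1 (with the convention that b^n with any negative index is 0, and the term with factor i/(i+j) or j/(i+j) is omitted when i + j = 0): b^{n+1}_{ijk} = ([n+1−k]/[n+1])·(i/(i+j))·q^k·b^n_{i−1,j,k} + ([n+1−k]/[n+1])·(j/(i+j))·q^k·b^n_{i,j−1,k} + ([k]/[n+1])·b^n_{i,j,k−1}. Then γ^n(u,v) = Σ_{i+j+k=n+1} b^{n+1}_{ijk} B^{n+1}_{ijk}(u,v) for all real u, v. -/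

import Mathlib

/-!
Everything reduces to degree elevation of a single basis function. By
`[n+1-k] [n+1 choose k] = [n+1] [n choose k]`, `[k+1] [n+1 choose k+1] = [n+1] [n choose k]` and
the ordinary identities `(i+1) C(i+j+1, i+1) = (j+1) C(i+j+1, i) = (i+j+1) C(i+j, i)`, the
elevated combination of `B^{n+1}_{i+1,j,k}`, `B^{n+1}_{i,j+1,k}` and `B^{n+1}_{i,j,k+1}` equals
`B^n_{ijk} · (q^k (u+v) + (1 - q^k u - q^k v)) = B^n_{ijk}`. Summing against `b^n` and shifting
the index in each of the three resulting sums produces exactly the coefficients `b^{n+1}`.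
-/

open Finset

/-- The q-integer [r] = 1 + q + ... + q^(r-1). -/
noncomputable def qInt (q : ℝ) (r : ℕ) : ℝ := ∑ s ∈ Finset.range r, q ^ s

/-- The q-factorial [r]!. -/
noncomputable def qFact (q : ℝ) : ℕ → ℝ
  | 0 => 1
  | r + 1 => qInt q (r + 1) * qFact q r

/-- The q-binomial coefficient [i choose j]_q (zero unless i ≥ j ≥ 0). -/
noncomputable def qBinom (q : ℝ) (i j : ℕ) : ℝ :=
  if j ≤ i then qFact q i / (qFact q j * qFact q (i - j)) else 0

/-- The q-binomial coefficient with integer indices, zero unless i ≥ j ≥ 0. -/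
noncomputable def qBinomZ (q : ℝ) (i j : ℤ) : ℝ :=
  if 0 ≤ j ∧ j ≤ i then qFact q i.toNat / (qFact q j.toNat * qFact q (i - j).toNat) else 0

/-- The triangular q-Bernstein polynomial B^n_{ijk}(u,v)
    (meaningful for i + j + k = n). -/
noncomputable def triB (q : ℝ) (n i j k : ℕ) (u v : ℝ) : ℝ :=
  qBinom q n k * (Nat.choose (i + j) i : ℝ) * u ^ i * v ^ j *
    ∏ s ∈ Finset.range k, (1 - q ^ s * u - q ^ s * v)

/-- The triangular q-Bernstein polynomial with integer indices; by convention it is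
    zero whenever any of the indices is negative. -/
noncomputable def triBZ (q : ℝ) (n : ℕ) (i j k : ℤ) (u v : ℝ) : ℝ :=
  if 0 ≤ i ∧ 0 ≤ j ∧ 0 ≤ k then triB q n i.toNat j.toNat k.toNat u v else 0

/-- The classical triangular Bernstein polynomial b^n_{ijk}(u,v). -/
noncomputable def triBern (n i j k : ℕ) (u v : ℝ) : ℝ :=
  (Nat.factorial n : ℝ) /
      ((Nat.factorial i : ℝ) * (Nat.factorial j : ℝ) * (Nat.factorial k : ℝ)) *
    u ^ i * v ^ j * (1 - u - v) ^ k

/-- The set of triples (i, j, k) of nonnegative integers with i + j + k = n. -/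
def simplex (n : ℕ) : Finset (ℕ × ℕ × ℕ) :=
  (Finset.range (n + 1) ×ˢ Finset.range (n + 1) ×ˢ Finset.range (n + 1)).filter
    (fun p => p.1 + p.2.1 + p.2.2 = n)

lemma qInt_pos {q : ℝ} (hq : 0 ≤ q) {r : ℕ} (hr : 0 < r) : 0 < qInt q r := by
  obtain ⟨r, rfl⟩ := Nat.exists_eq_add_of_lt hr
  rw [qInt, zero_add, sum_range_succ']
  simpa using add_pos_of_nonneg_of_pos (sum_nonneg fun s _ => pow_nonneg hq (s + 1)) one_pos

lemma qFact_pos {q : ℝ} (hq : 0 ≤ q) : ∀ r, 0 < qFact q r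
  | 0 => one_pos
  | r + 1 => mul_pos (qInt_pos hq r.succ_pos) (qFact_pos hq r)

lemma qInt_succ_sub_mul_qBinom_succ {q : ℝ} (hq : 0 ≤ q) {n k : ℕ} (hk : k ≤ n) :
    qInt q (n + 1 - k) * qBinom q (n + 1) k = qInt q (n + 1) * qBinom q n k := by
  rw [qBinom, qBinom, if_pos (by omega), if_pos hk, show n + 1 - k = n - k + 1 by omega]
  simp only [qFact]
  have := (qFact_pos hq k).ne'
  have := (qFact_pos hq (n - k)).ne'
  have := (qInt_pos hq (n - k).succ_pos).ne'
  field_simp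

lemma qInt_succ_mul_qBinom_succ_succ {q : ℝ} (hq : 0 ≤ q) {n k : ℕ} (hk : k ≤ n) :
    qInt q (k + 1) * qBinom q (n + 1) (k + 1) = qInt q (n + 1) * qBinom q n k := by
  rw [qBinom, qBinom, if_pos (by omega), if_pos hk, Nat.add_sub_add_right]
  simp only [qFact]
  have := (qFact_pos hq k).ne'
  have := (qFact_pos hq (n - k)).ne'
  have := (qInt_pos hq k.succ_pos).ne'
  field_simp

lemma mem_simplex {n : ℕ} {p : ℕ × ℕ × ℕ} : p ∈ simplex n ↔ p.1 + p.2.1 + p.2.2 = n := by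
  simp only [simplex, mem_filter, mem_product, mem_range, and_iff_right_iff_imp]
  omega

lemma triB_eq_elevation {q : ℝ} (hq : 0 ≤ q) {n i j k : ℕ} (h : i + j + k = n) (u v : ℝ) :
    triB q n i j k u v =
      qInt q (n + 1 - k) / qInt q (n + 1) * (((i : ℝ) + 1) / ((i : ℝ) + (j : ℝ) + 1)) * q ^ k *
          triB q (n + 1) (i + 1) j k u v +
        qInt q (n + 1 - k) / qInt q (n + 1) * (((j : ℝ) + 1) / ((i : ℝ) + (j : ℝ) + 1)) * q ^ k *
          triB q (n + 1) i (j + 1) k u v +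
        qInt q (k + 1) / qInt q (n + 1) * triB q (n + 1) i j (k + 1) u v := by
  have hk : k ≤ n := by omega
  have hn : qInt q (n + 1) ≠ 0 := (qInt_pos hq n.succ_pos).ne'
  have hnk : qInt q (n + 1 - k) ≠ 0 := (qInt_pos hq (by omega)).ne'
  have hk1 : qInt q (k + 1) ≠ 0 := (qInt_pos hq k.succ_pos).ne'
  have hi : ((i : ℝ) + 1) ≠ 0 := by positivity
  have hj : ((j : ℝ) + 1) ≠ 0 := by positivity
  have hij : ((i : ℝ) + j + 1) ≠ 0 := by positivity
  have hX : qBinom q (n + 1) k = qInt q (n + 1) * qBinom q n k / qInt q (n + 1 - k) := by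
    rw [← qInt_succ_sub_mul_qBinom_succ hq hk, mul_div_cancel_left₀ _ hnk]
  have hY : qBinom q (n + 1) (k + 1) = qInt q (n + 1) * qBinom q n k / qInt q (k + 1) := by
    rw [← qInt_succ_mul_qBinom_succ_succ hq hk, mul_div_cancel_left₀ _ hk1]
  have hC₁ : ((i + 1 + j).choose (i + 1) : ℝ) = (i + j + 1) * (i + j).choose i / (i + 1) := by
    rw [eq_div_iff hi, Nat.add_right_comm]
    exact_mod_cast (Nat.add_one_mul_choose_eq (i + j) i).symm
  have hC₂ : ((i + (j + 1)).choose i : ℝ) = (i + j + 1) * (i + j).choose i / (j + 1) := by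
    rw [eq_div_iff hj, mul_comm _ ((i + j).choose i : ℝ), ← add_assoc]
    have := Nat.choose_mul_succ_eq (i + j) i
    rw [show i + j + 1 - i = j + 1 by omega] at this
    exact_mod_cast this.symm
  simp only [triB, hX, hY, hC₁, hC₂, prod_range_succ]
  generalize ∏ s ∈ range k, (1 - q ^ s * u - q ^ s * v) = P
  field_simp
  ring

lemma sum_simplex_add {m : ℕ} (d : ℕ × ℕ × ℕ) (hd : d.1 + d.2.1 + d.2.2 = m) (n : ℕ)
    (f : ℕ × ℕ × ℕ → ℝ) :
    ∑ p ∈ simplex n, f (p + d) = ∑ p ∈ simplex (n + m) with d ≤ p, f p := by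
  apply sum_nbij' (· + d) (· - d)
  all_goals
    rintro ⟨x, y, z⟩
    obtain ⟨a, b, c⟩ := d
    simp_all [mem_simplex, Prod.mk_le_mk]
    try omega

lemma sum_simplex_succ_ite_fst (n : ℕ) (f : ℕ × ℕ × ℕ → ℝ) :
    ∑ p ∈ simplex (n + 1), (if 0 < p.1 then f p else 0) =
      ∑ p ∈ simplex n, f (p.1 + 1, p.2.1, p.2.2) := by
  rw [← sum_filter]
  convert (sum_simplex_add (1, 0, 0) rfl n f).symm using 2
  · ext p
    simp [Prod.le_def, Nat.one_le_iff_ne_zero, Nat.pos_iff_ne_zero]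
  · rfl

lemma sum_simplex_succ_ite_snd (n : ℕ) (f : ℕ × ℕ × ℕ → ℝ) :
    ∑ p ∈ simplex (n + 1), (if 0 < p.2.1 then f p else 0) =
      ∑ p ∈ simplex n, f (p.1, p.2.1 + 1, p.2.2) := by
  rw [← sum_filter]
  convert (sum_simplex_add (0, 1, 0) rfl n f).symm using 2
  · ext p
    simp [Prod.le_def, Nat.one_le_iff_ne_zero, Nat.pos_iff_ne_zero]
  · rfl

lemma sum_simplex_succ_ite_thd (n : ℕ) (f : ℕ × ℕ × ℕ → ℝ) :
    ∑ p ∈ simplex (n + 1), (if 0 < p.2.2 then f p else 0) =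
      ∑ p ∈ simplex n, f (p.1, p.2.1, p.2.2 + 1) := by
  rw [← sum_filter]
  convert (sum_simplex_add (0, 0, 1) rfl n f).symm using 2
  · ext p
    simp [Prod.le_def, Nat.one_le_iff_ne_zero, Nat.pos_iff_ne_zero]
  · rfl

noncomputable def elevatedCoeff (q : ℝ) (n : ℕ) (b : ℕ → ℕ → ℕ → ℝ) (i j k : ℕ) : ℝ :=
  (if 0 < i then
      qInt q (n + 1 - k) / qInt q (n + 1) * ((i : ℝ) / ((i : ℝ) + (j : ℝ))) * q ^ k *
        b (i - 1) j k
    else 0) +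
  (if 0 < j then
      qInt q (n + 1 - k) / qInt q (n + 1) * ((j : ℝ) / ((i : ℝ) + (j : ℝ))) * q ^ k *
        b i (j - 1) k
    else 0) +
  (if 0 < k then qInt q k / qInt q (n + 1) * b i j (k - 1) else 0)

theorem sum_mul_triB_eq_sum_elevatedCoeff_mul_triB {q : ℝ} (hq : 0 ≤ q) (n : ℕ)
    (b : ℕ → ℕ → ℕ → ℝ) (u v : ℝ) :
    ∑ p ∈ simplex n, b p.1 p.2.1 p.2.2 * triB q n p.1 p.2.1 p.2.2 u v =
      ∑ p ∈ simplex (n + 1),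
        elevatedCoeff q n b p.1 p.2.1 p.2.2 * triB q (n + 1) p.1 p.2.1 p.2.2 u v := by
  simp only [elevatedCoeff, add_mul, ite_mul, zero_mul, sum_add_distrib,
    sum_simplex_succ_ite_fst, sum_simplex_succ_ite_snd, sum_simplex_succ_ite_thd]
  rw [← sum_add_distrib, ← sum_add_distrib]
  refine sum_congr rfl fun p hp => ?_
  rw [triB_eq_elevation hq (mem_simplex.1 hp)]
  simp only [Nat.add_sub_cancel]
  push_cast
  ring

theorem stmt6_general (q : ℝ) (hq0 : 0 < q) (n : ℕ)
    (b b' : ℕ → ℕ → ℕ → ℝ)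
    (hb' : ∀ i j k, i + j + k = n + 1 →
      b' i j k =
        (if 0 < i then
            qInt q (n + 1 - k) / qInt q (n + 1) * ((i : ℝ) / ((i : ℝ) + (j : ℝ))) * q ^ k *
              b (i - 1) j k
          else 0) +
        (if 0 < j then
            qInt q (n + 1 - k) / qInt q (n + 1) * ((j : ℝ) / ((i : ℝ) + (j : ℝ))) * q ^ k *
              b i (j - 1) k
          else 0) +
        (if 0 < k then qInt q k / qInt q (n + 1) * b i j (k - 1) else 0))
    (u v : ℝ) :
    ∑ p ∈ simplex n, b p.1 p.2.1 p.2.2 * triB q n p.1 p.2.1 p.2.2 u v =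
      ∑ p ∈ simplex (n + 1), b' p.1 p.2.1 p.2.2 * triB q (n + 1) p.1 p.2.1 p.2.2 u v := by
  rw [sum_mul_triB_eq_sum_elevatedCoeff_mul_triB hq0.le]
  exact sum_congr rfl fun p hp => by rw [hb' _ _ _ (mem_simplex.1 hp), elevatedCoeff]

/-- degree elevation for the q-Bézier representation. -/
theorem stmt6 (q : ℝ) (hq0 : 0 < q) (hq1 : q ≤ 1) (n : ℕ)
    (b b' : ℕ → ℕ → ℕ → ℝ)
    (hb' : ∀ i j k, i + j + k = n + 1 →
      b' i j k =
        (if 0 < i then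
            qInt q (n + 1 - k) / qInt q (n + 1) * ((i : ℝ) / ((i : ℝ) + (j : ℝ))) * q ^ k *
              b (i - 1) j k
          else 0) +
        (if 0 < j then
            qInt q (n + 1 - k) / qInt q (n + 1) * ((j : ℝ) / ((i : ℝ) + (j : ℝ))) * q ^ k *
              b i (j - 1) k
          else 0) +
        (if 0 < k then qInt q k / qInt q (n + 1) * b i j (k - 1) else 0))
    (u v : ℝ) :
    ∑ p ∈ simplex n, b p.1 p.2.1 p.2.2 * triB q n p.1 p.2.1 p.2.2 u v =
      ∑ p ∈ simplex (n + 1), b' p.1 p.2.1 p.2.2 * triB q (n + 1) p.1 p.2.1 p.2.2 u v :=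
  stmt6_general q hq0 n b b' hb' u v
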